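/- arXiv:1612.01308 — 5 statements merged into one kernel-verified Lean document; each statement's English description precedes it below -/
import Mathlib

section
/- For the (2,1) extended Davis–Skodje system ẋ₁ = -x₁, ẋ₂ = -2x₂, ẏ = -γy + ((γ-1)x₁+γx₁²)/(1+x₁)² + (2(γ-2)x₂+2γx₂²)/(1+x₂)², the graph y = h(x₁,x₂) := (x₁ + 2x₂ + 3x₁x₂)/((1+x₁)(1+x₂)) is invariant: ∂₁h·(-x₁) + ∂₂h·(-2x₂) equals the right-hand side of the ẏ equation evaluated at y = h(x₁,x₂), for all x₁, x₂ > -1 distinct from -1. -/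
/-!
The graph separates: `h(x₁, x₂) = φ(x₁) + 2 φ(x₂)` with `φ(t) = t / (1 + t)`, and `φ' = 1 / (1 + t)²`.
The invariance equation therefore splits into two copies of the one-dimensional Davis–Skodje
identity `φ'(x) · (-λ x) = -γ φ(x) + ((γ - λ) x + γ x²) / (1 + x)²`, with `λ = 1` for `x₁` and,
after multiplying by `2`, `λ = 2` for `x₂`.
-/

lemma one_add_ne_zero_of_ne_neg_one {x : ℝ} (hx : x ≠ -1) : 1 + x ≠ 0 :=
  fun h => hx (by linarith)

lemma hasDerivAt_div_one_add {x : ℝ} (hx : x ≠ -1) :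
    HasDerivAt (fun t : ℝ => t / (1 + t)) (1 / (1 + x) ^ 2) x :=
  ((hasDerivAt_id' x).fun_div ((hasDerivAt_id' x).const_add 1)
    (one_add_ne_zero_of_ne_neg_one hx)).congr_deriv (by ring)

lemma davis_skodje_one_dim_invariant (γ l : ℝ) {x : ℝ} (hx : x ≠ -1) :
    1 / (1 + x) ^ 2 * (-(l * x)) = -γ * (x / (1 + x)) + ((γ - l) * x + γ * x ^ 2) / (1 + x) ^ 2 := by
  have hx' := one_add_ne_zero_of_ne_neg_one hx
  field_simp
  ring

lemma davis_skodje_graph_separates {x₁ x₂ : ℝ} (h₁ : x₁ ≠ -1) (h₂ : x₂ ≠ -1) :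
    (x₁ + 2 * x₂ + 3 * x₁ * x₂) / ((1 + x₁) * (1 + x₂)) = x₁ / (1 + x₁) + 2 * (x₂ / (1 + x₂)) := by
  have h₁' := one_add_ne_zero_of_ne_neg_one h₁
  have h₂' := one_add_ne_zero_of_ne_neg_one h₂
  field_simp
  ring

theorem extended_davis_skodje_invariant_general (γ : ℝ)
    (h : ℝ → ℝ → ℝ)
    (hh : ∀ x₁ x₂ : ℝ, x₁ ≠ -1 → x₂ ≠ -1 →
      h x₁ x₂ = (x₁ + 2 * x₂ + 3 * x₁ * x₂) / ((1 + x₁) * (1 + x₂))) :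
    ∀ x₁ x₂ : ℝ, x₁ ≠ -1 → x₂ ≠ -1 →
      deriv (fun s => h s x₂) x₁ * (-x₁) + deriv (fun s => h x₁ s) x₂ * (-(2 * x₂)) =
        -γ * h x₁ x₂ + ((γ - 1) * x₁ + γ * x₁ ^ 2) / (1 + x₁) ^ 2
          + (2 * (γ - 2) * x₂ + 2 * γ * x₂ ^ 2) / (1 + x₂) ^ 2 := by
  intro x₁ x₂ h₁ h₂
  have split : ∀ a b, a ≠ -1 → b ≠ -1 → h a b = a / (1 + a) + 2 * (b / (1 + b)) :=
    fun a b ha hb => (hh a b ha hb).trans (davis_skodje_graph_separates ha hb)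
  have d₁ : HasDerivAt (fun s => h s x₂) (1 / (1 + x₁) ^ 2) x₁ :=
    ((hasDerivAt_div_one_add h₁).add_const _).congr_of_eventuallyEq
      ((eventually_ne_nhds h₁).mono fun s hs => split s x₂ hs h₂)
  have d₂ : HasDerivAt (fun s => h x₁ s) (2 * (1 / (1 + x₂) ^ 2)) x₂ :=
    (((hasDerivAt_div_one_add h₂).const_mul 2).const_add _).congr_of_eventuallyEq
      ((eventually_ne_nhds h₂).mono fun s hs => split x₁ s h₁ hs)
  rw [d₁.deriv, d₂.deriv, split x₁ x₂ h₁ h₂]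
  linear_combination davis_skodje_one_dim_invariant γ 1 h₁ + 2 * davis_skodje_one_dim_invariant γ 2 h₂

/-- For the (2,1) extended Davis–Skodje system, the graph
`y = h(x₁,x₂) = (x₁ + 2x₂ + 3x₁x₂)/((1+x₁)(1+x₂))` is invariant:
`∂₁h·(-x₁) + ∂₂h·(-2x₂)` equals the right-hand side of the `ẏ` equation
evaluated at `y = h(x₁,x₂)`, for all `x₁ ≠ -1`, `x₂ ≠ -1`. -/
theorem extended_davis_skodje_invariant (γ : ℝ) (hγ : 2 < γ)
    (h : ℝ → ℝ → ℝ)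
    (hh : ∀ x₁ x₂ : ℝ, x₁ ≠ -1 → x₂ ≠ -1 →
      h x₁ x₂ = (x₁ + 2 * x₂ + 3 * x₁ * x₂) / ((1 + x₁) * (1 + x₂))) :
    ∀ x₁ x₂ : ℝ, x₁ ≠ -1 → x₂ ≠ -1 →
      deriv (fun s => h s x₂) x₁ * (-x₁) + deriv (fun s => h x₁ s) x₂ * (-(2 * x₂)) =
        -γ * h x₁ x₂ + ((γ - 1) * x₁ + γ * x₁ ^ 2) / (1 + x₁) ^ 2
          + (2 * (γ - 2) * x₂ + 2 * γ * x₂ ^ 2) / (1 + x₂) ^ 2 :=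
  extended_davis_skodje_invariant_general γ h hh
end

section
/- For the (3,2) model with ε ≠ 0 (and ε ∉ {2, 4/7, 3/4, 1/2}), the critical graph (y₁,y₂) = (x₁²/2 + x₂²x₃/4, x₁⁴ + x₂³/3) is not invariant under the flow: there exists (x₁,x₂,x₃) ∈ ℝ³ where Dh₀(x)·f(x) ≠ g(x,h₀(x)). -/
/-- For the (3,2) model with `ε ≠ 0` (and `ε ∉ {2, 4/7, 3/4, 1/2}`), the critical
graph `(y₁,y₂) = (x₁²/2 + x₂²x₃/4, x₁⁴ + x₂³/3)` is not invariant under the flow: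
there is a point where `Dh₀(x)·f(x) ≠ g(x,h₀(x))`. -/
theorem model32_critical_not_invariant (ε : ℝ) (hε : ε ≠ 0)
    (h1 : 2 - ε ≠ 0) (h2 : 4 - 7 * ε ≠ 0) (h3 : 3 - 4 * ε ≠ 0) (h4 : 3 - 6 * ε ≠ 0)
    (h₁ h₂ : ℝ → ℝ → ℝ → ℝ)
    (hh₁ : ∀ x₁ x₂ x₃ : ℝ, h₁ x₁ x₂ x₃ = x₁ ^ 2 / 2 + x₂ ^ 2 * x₃ / 4)
    (hh₂ : ∀ x₁ x₂ x₃ : ℝ, h₂ x₁ x₂ x₃ = x₁ ^ 4 + x₂ ^ 3 / 3) :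
    ∃ x₁ x₂ x₃ : ℝ,
      ¬ ((deriv (fun s => h₁ s x₂ x₃) x₁ * (-(1 * ε * x₁))
          + deriv (fun s => h₁ x₁ s x₃) x₂ * (-(2 * ε * x₂))
          + deriv (fun s => h₁ x₁ x₂ s) x₃ * (-(3 * ε * x₃))
            = 2 * x₁ ^ 2 + x₂ ^ 2 * x₃ - 4 * h₁ x₁ x₂ x₃) ∧
        (deriv (fun s => h₂ s x₂ x₃) x₁ * (-(1 * ε * x₁))
          + deriv (fun s => h₂ x₁ s x₃) x₂ * (-(2 * ε * x₂))
          + deriv (fun s => h₂ x₁ x₂ s) x₃ * (-(3 * ε * x₃))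
            = 3 * x₁ ^ 4 + x₂ ^ 3 - 3 * h₂ x₁ x₂ x₃)) := by
  refine ⟨1, 0, 0, fun h => ?_⟩
  have e1 := h.1
  have d1 : (fun s : ℝ => h₁ s 0 0) = fun s : ℝ => s ^ 2 / 2 := by
    funext s; rw [hh₁]; ring
  have d2 : (fun s : ℝ => h₁ 1 s 0) = fun s : ℝ => 1 / 2 := by
    funext s; rw [hh₁]; ring
  have d3 : (fun s : ℝ => h₁ 1 0 s) = fun s : ℝ => 1 / 2 := by
    funext s; rw [hh₁]; ring
  rw [d1, d2, d3, hh₁] at e1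
  simp [deriv_const] at e1
  exact hε (by linarith)
end

section
/- For the Davis–Skodje model with a(u) = u/(u+1) + c·u^γ, the function F₂(c) = ||J(u,a(u))·(f(u,a(u)), g(u,a(u)))ᵀ||² (J the Jacobian of the vector field) is a strictly convex quadratic in c with second derivative F₂''(c) = 2(u^γ γ²)² > 0 for all u > 0, and its unique minimizer is c* = u(u−1)/(u^γ γ² (u+1)³). -/
open Real

/-! Since `f` depends on `x` only and `g` is affine in `y`, the Jacobian is constant in `y`, and
`J·(f, g)` at `(u, a(u))` equals `(u, u^γ γ² c + u(1 − u)/(u + 1)³)`: its first entry does not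
depend on `c` and its second is affine in `c` with slope `u^γ γ² ≠ 0`. Hence `F₂` is a constant
plus the square of a non-degenerate affine function of `c`, which is strictly convex with
second derivative `2(u^γ γ²)²` and minimal exactly at the root of the affine function. -/

section AffineSq

variable (b A K : ℝ)

theorem deriv_const_add_affine_sq :
    deriv (fun c : ℝ => b + (A * c + K) ^ 2) = fun c => 2 * A * (A * c + K) := by
  funext c
  have h := ((((hasDerivAt_id c).const_mul A).add_const K).fun_pow 2).const_add b
  simpa [mul_comm, mul_left_comm, mul_assoc] using h.deriv

theorem deriv_deriv_const_add_affine_sq (c : ℝ) :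
    deriv (deriv fun c : ℝ => b + (A * c + K) ^ 2) c = 2 * A ^ 2 := by
  rw [deriv_const_add_affine_sq]
  simp [sq, mul_assoc]

variable {A}

theorem strictConvexOn_const_add_affine_sq (hA : A ≠ 0) :
    StrictConvexOn ℝ Set.univ fun c : ℝ => b + (A * c + K) ^ 2 :=
  strictConvexOn_univ_of_deriv2_pos (by fun_prop) fun c => by
    rw [Function.iterate_succ_apply, Function.iterate_one, deriv_deriv_const_add_affine_sq]
    positivity

theorem const_add_affine_sq_lt_of_ne_root (hA : A ≠ 0) {c₀ c : ℝ} (h₀ : A * c₀ + K = 0)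
    (hc : c ≠ c₀) : b + (A * c₀ + K) ^ 2 < b + (A * c + K) ^ 2 := by
  have hne : A * c + K ≠ 0 := fun h => hc (mul_left_cancel₀ hA (by linarith))
  rw [h₀]
  nlinarith [sq_pos_of_ne_zero hne]

end AffineSq

section DavisSkodje

variable {γ u : ℝ}

theorem hasDerivAt_davisSkodje_source (hu : 1 + u ≠ 0) :
    HasDerivAt (fun s => ((γ - 1) * s + γ * s ^ 2) / (1 + s) ^ 2)
      ((γ - 1 + (γ + 1) * u) / (1 + u) ^ 3) u := by
  have hnum : HasDerivAt (fun s : ℝ => (γ - 1) * s + γ * s ^ 2) (γ - 1 + γ * (2 * u)) u := by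
    simpa using ((hasDerivAt_id u).const_mul (γ - 1)).fun_add ((hasDerivAt_pow 2 u).const_mul γ)
  have hden : HasDerivAt (fun s : ℝ => (1 + s) ^ 2) (2 * (1 + u)) u := by
    simpa using ((hasDerivAt_id u).const_add 1).fun_pow 2
  refine (hnum.fun_div hden (pow_ne_zero 2 hu)).congr_deriv ?_
  field_simp
  ring

theorem davisSkodje_jacobian_mul_field_eq (hu : 1 + u ≠ 0) (f g : ℝ → ℝ → ℝ)
    (hf : ∀ x y, f x y = -x)
    (hg : ∀ x y, g x y = -γ * y + ((γ - 1) * x + γ * x ^ 2) / (1 + x) ^ 2) (c y : ℝ)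
    (hy : y = u / (u + 1) + c * u ^ γ) :
    (deriv (fun s => f s y) u * f u y + deriv (fun s => f u s) y * g u y) ^ 2
      + (deriv (fun s => g s y) u * f u y + deriv (fun s => g u s) y * g u y) ^ 2
      = u ^ 2 + (u ^ γ * γ ^ 2 * c + u * (1 - u) / (u + 1) ^ 3) ^ 2 := by
  have hfx : deriv (fun s => f s y) u = -1 := by simp [hf]
  have hfy : deriv (fun s => f u s) y = 0 := by simp [hf]
  have hgx : deriv (fun s => g s y) u = (γ - 1 + (γ + 1) * u) / (1 + u) ^ 3 := by
    simp_rw [hg]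
    exact ((hasDerivAt_davisSkodje_source hu).const_add _).deriv
  have hgy : deriv (fun s => g u s) y = -γ := by
    simp [hg]
  have hu' : u + 1 ≠ 0 := by rwa [add_comm]
  rw [hfx, hfy, hgx, hgy, hf, hg, hy]
  field_simp
  ring

end DavisSkodje

/-- For the Davis–Skodje model with `a(u) = u/(u+1) + c·u^γ`, the function
`F₂(c) = ‖J(u,a(u))·(f(u,a(u)), g(u,a(u)))ᵀ‖²` (with `J` the Jacobian of the vector
field) is a strictly convex quadratic in `c` with `F₂'' ≡ 2(u^γ γ²)² > 0`, and its
unique minimizer is `c* = u(u−1)/(u^γ γ² (u+1)³)`. -/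
theorem F2_strictly_convex_unique_min (γ u : ℝ) (hγ : 1 < γ) (hu : 0 < u)
    (f g : ℝ → ℝ → ℝ)
    (hf : ∀ x y, f x y = -x)
    (hg : ∀ x y, g x y = -γ * y + ((γ - 1) * x + γ * x ^ 2) / (1 + x) ^ 2)
    (a : ℝ → ℝ → ℝ) (ha : ∀ c v, a c v = v / (v + 1) + c * v ^ γ)
    (F₂ : ℝ → ℝ)
    (hF : ∀ c, F₂ c =
      (deriv (fun s => f s (a c u)) u * f u (a c u)
        + deriv (fun s => f u s) (a c u) * g u (a c u)) ^ 2
      + (deriv (fun s => g s (a c u)) u * f u (a c u)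
        + deriv (fun s => g u s) (a c u) * g u (a c u)) ^ 2) :
    StrictConvexOn ℝ Set.univ F₂ ∧
    (∀ c, deriv (deriv F₂) c = 2 * (u ^ γ * γ ^ 2) ^ 2) ∧
    0 < 2 * (u ^ γ * γ ^ 2) ^ 2 ∧
    (∀ c, c ≠ u * (u - 1) / (u ^ γ * γ ^ 2 * (u + 1) ^ 3) →
      F₂ (u * (u - 1) / (u ^ γ * γ ^ 2 * (u + 1) ^ 3)) < F₂ c) := by
  have hA : 0 < u ^ γ * γ ^ 2 := by
    have : 0 < γ := by linarith
    positivity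
  obtain rfl : F₂ = fun c => u ^ 2 + (u ^ γ * γ ^ 2 * c + u * (1 - u) / (u + 1) ^ 3) ^ 2 :=
    funext fun c => (hF c).trans <|
      davisSkodje_jacobian_mul_field_eq (by positivity) f g hf hg c _ (ha c u)
  refine ⟨strictConvexOn_const_add_affine_sq _ _ hA.ne', deriv_deriv_const_add_affine_sq _ _ _,
    by positivity, fun c hc => const_add_affine_sq_lt_of_ne_root _ _ hA.ne' ?_ hc⟩
  field_simp
  ring
end

section
/- For the Davis–Skodje model consider F₃(c) = k₁·||(f(u,a(u)), g(u,a(u)))||² − k₂·||(u, a(u))||² with a(u) = u/(u+1) + c·u^γ, k₁ = 1, k₂ = γ/(u+1). Then for fixed u > 0 with γu + γ − 1 ≠ 0, c = 0 is the unique critical point of F₃ and F₃''(0) = 2γ(u^γ)²(γu+γ−1)/(u+1) > 0, so c = 0 is a strict local minimizer. -/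
open Real

/-- For the Davis–Skodje model, `F₃(c) = ‖(f(u,a(u)), g(u,a(u)))‖² − (γ/(u+1))·‖(u,a(u))‖²`
with `a(u) = u/(u+1) + c·u^γ` has `c = 0` as its unique critical point,
`F₃''(0) = 2γ(u^γ)²(γu+γ−1)/(u+1) > 0`, so `c = 0` is a strict local minimizer. -/
theorem F3_critical_point (γ u : ℝ) (hγ : 1 < γ) (hu : 0 < u)
    (hpos : 0 < γ * u + γ - 1)
    (f g : ℝ → ℝ → ℝ)
    (hf : ∀ x y, f x y = -x)
    (hg : ∀ x y, g x y = -γ * y + ((γ - 1) * x + γ * x ^ 2) / (1 + x) ^ 2)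
    (a : ℝ → ℝ → ℝ) (ha : ∀ c v, a c v = v / (v + 1) + c * v ^ γ)
    (k₁ k₂ : ℝ) (hk₁ : k₁ = 1) (hk₂ : k₂ = γ / (u + 1))
    (F₃ : ℝ → ℝ)
    (hF : ∀ c, F₃ c = k₁ * ((f u (a c u)) ^ 2 + (g u (a c u)) ^ 2)
        - k₂ * (u ^ 2 + (a c u) ^ 2)) :
    (∀ c, deriv F₃ c = 0 ↔ c = 0) ∧
    deriv (deriv F₃) 0 = 2 * γ * (u ^ γ) ^ 2 * (γ * u + γ - 1) / (u + 1) ∧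
    0 < 2 * γ * (u ^ γ) ^ 2 * (γ * u + γ - 1) / (u + 1) ∧
    (∃ δ > 0, ∀ c : ℝ, c ≠ 0 → |c| < δ → F₃ 0 < F₃ c) := by
  have hu1 : (0:ℝ) < u + 1 := by linarith
  have hu1' : u + 1 ≠ 0 := ne_of_gt hu1
  have h1u : (1:ℝ) + u ≠ 0 := by intro h; apply hu1'; linarith [h]
  have hA : 0 < u ^ γ := Real.rpow_pos_of_pos hu γ
  set K : ℝ := γ * (u ^ γ) ^ 2 * (γ * u + γ - 1) / (u + 1) with hK
  have hKpos : 0 < K := by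
    apply div_pos _ hu1
    have : 0 < γ := by linarith
    positivity
  have hform : F₃ = fun c => F₃ 0 + K * c ^ 2 := by
    funext c
    rw [hF c, hF 0, hf, hf, hg, hg, ha, ha, hk₁, hk₂, hK]
    field_simp
    ring
  have hd1 : deriv F₃ = fun c => 2 * K * c := by
    rw [hform]
    funext c
    rw [deriv_const_add]
    have : deriv (fun c : ℝ => K * c ^ 2) c = K * (2 * c) := by
      rw [deriv_const_mul _ (by fun_prop)]
      simp [deriv_pow]
    rw [this]; ring
  refine ⟨?_, ?_, ?_, ?_⟩
  · intro c
    rw [hd1]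
    constructor
    · intro h
      have h' : 2 * K * c = 0 := h
      have : K * c = 0 := by linarith
      rcases mul_eq_zero.mp this with h' | h'
      · exact absurd h' (ne_of_gt hKpos)
      · exact h'
    · intro h; simp [h]
  · rw [hd1]
    have : deriv (fun c : ℝ => 2 * K * c) 0 = 2 * K := by
      rw [deriv_const_mul _ (by fun_prop)]
      simp
    rw [this, hK]; ring
  · have : 2 * γ * (u ^ γ) ^ 2 * (γ * u + γ - 1) / (u + 1) = 2 * K := by
      rw [hK]; ring
    rw [this]; linarith
  · refine ⟨1, one_pos, fun c hc _ => ?_⟩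
    rw [hform]
    simp only
    nlinarith [sq_pos_of_ne_zero hc, pow_two_nonneg c]
end

section
/- For any C¹ functions v₁, v₂ : ℝ² → ℝ and ε > 0 with ε ∉ {2, 4/7, 3/4, 1/2}, the pair a⁽¹⁾(u) = u₁²/(2−ε) + u₂²u₃/(4−7ε) + v₁(u₂/u₁², u₃/u₁³)·u₁^{4/ε}, a⁽²⁾(u) = 3u₁⁴/(3−4ε) + u₂³/(3−6ε) + v₂(u₂/u₁², u₃/u₁³)·u₁^{3/ε}, defined for u₁ > 0, solves the pair of first-order PDEs ε(u₁∂₁ + 2u₂∂₂ + 3u₃∂₃)a⁽¹⁾ − 4a⁽¹⁾ + 2u₁² + u₂²u₃ = 0 and ε(u₁∂₁ + 2u₂∂₂ + 3u₃∂₃)a⁽²⁾ − 3a⁽²⁾ + 3u₁⁴ + u₂³ = 0. -/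
/-!
The operator `u₁∂₁ + 2u₂∂₂ + 3u₃∂₃` is the derivative at `t = 1` along the weighted dilation
`u ↦ (t u₁, t² u₂, t³ u₃)` (chain rule, for jointly differentiable functions). Each summand of
`a⁽ⁱ⁾` is weighted homogeneous: `u₁²`, `u₂²u₃`, `u₁⁴`, `u₂³` have degrees `2, 7, 4, 6`, and
`v(u₂/u₁², u₃/u₁³)·u₁^r` has degree `r` because its arguments are dilation invariant. So the
operator multiplies each summand by its degree, and both PDEs reduce to identities between
the coefficients.
-/

open Real

noncomputable def weightedEuler (a : ℝ → ℝ → ℝ → ℝ) (u₁ u₂ u₃ : ℝ) : ℝ :=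
  u₁ * deriv (fun s => a s u₂ u₃) u₁ + 2 * u₂ * deriv (fun s => a u₁ s u₃) u₂
    + 3 * u₃ * deriv (fun s => a u₁ u₂ s) u₃

theorem weightedEuler_eq_deriv_dilation {a : ℝ → ℝ → ℝ → ℝ} {u₁ u₂ u₃ : ℝ}
    (ha : DifferentiableAt ℝ (fun p : ℝ × ℝ × ℝ => a p.1 p.2.1 p.2.2) (u₁, u₂, u₃)) :
    weightedEuler a u₁ u₂ u₃ = deriv (fun t => a (t * u₁) (t ^ 2 * u₂) (t ^ 3 * u₃)) 1 := by
  set L := fderiv ℝ (fun p : ℝ × ℝ × ℝ => a p.1 p.2.1 p.2.2) (u₁, u₂, u₃)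
  have hL := ha.hasFDerivAt
  have d₁ : HasDerivAt (fun s => a s u₂ u₃) (L (1, 0, 0)) u₁ :=
    hL.comp_hasDerivAt_of_eq _ ((hasDerivAt_id' u₁).prodMk (hasDerivAt_const u₁ (u₂, u₃))) rfl
  have d₂ : HasDerivAt (fun s => a u₁ s u₃) (L (0, 1, 0)) u₂ :=
    hL.comp_hasDerivAt_of_eq _ ((hasDerivAt_const u₂ u₁).prodMk
      ((hasDerivAt_id' u₂).prodMk (hasDerivAt_const u₂ u₃))) rfl
  have d₃ : HasDerivAt (fun s => a u₁ u₂ s) (L (0, 0, 1)) u₃ :=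
    hL.comp_hasDerivAt_of_eq _ ((hasDerivAt_const u₃ u₁).prodMk
      ((hasDerivAt_const u₃ u₂).prodMk (hasDerivAt_id' u₃))) rfl
  have hγ : HasDerivAt (fun t : ℝ => (t * u₁, t ^ 2 * u₂, t ^ 3 * u₃))
      (u₁ • (1, 0, 0) + (2 * u₂) • (0, 1, 0) + (3 * u₃) • (0, 0, 1)) 1 := by
    refine ((hasDerivAt_id' 1).mul_const u₁).prodMk
      ((((hasDerivAt_pow 2 1).mul_const u₂)).prodMk ((hasDerivAt_pow 3 1).mul_const u₃))
      |>.congr_deriv ?_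
    ext <;> simp
  have hdil : HasDerivAt (fun t => a (t * u₁) (t ^ 2 * u₂) (t ^ 3 * u₃))
      (L (u₁ • (1, 0, 0) + (2 * u₂) • (0, 1, 0) + (3 * u₃) • (0, 0, 1))) 1 :=
    hL.comp_hasDerivAt_of_eq 1 hγ (by simp)
  rw [weightedEuler, d₁.deriv, d₂.deriv, d₃.deriv, hdil.deriv]
  simp only [map_add, map_smul, smul_eq_mul]

theorem similarityTerm_dilation (v : ℝ × ℝ → ℝ) (r : ℝ) {t u₁ : ℝ} (ht : 0 < t) (hu : 0 ≤ u₁)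
    (u₂ u₃ : ℝ) :
    v (t ^ 2 * u₂ / (t * u₁) ^ 2, t ^ 3 * u₃ / (t * u₁) ^ 3) * (t * u₁) ^ r
      = t ^ r * (v (u₂ / u₁ ^ 2, u₃ / u₁ ^ 3) * u₁ ^ r) := by
  rw [mul_pow, mul_pow, mul_div_mul_left _ _ (by positivity), mul_div_mul_left _ _ (by positivity),
    mul_rpow ht.le hu]
  ring

theorem hasDerivAt_pow_add_pow_add_rpow (m n : ℕ) (r A B C : ℝ) :
    HasDerivAt (fun t : ℝ => t ^ m * A + t ^ n * B + t ^ r * C) (m * A + n * B + r * C) 1 := by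
  refine (((hasDerivAt_pow m 1).mul_const A).add ((hasDerivAt_pow n 1).mul_const B)).add
    ((hasDerivAt_rpow_const (p := r) (Or.inl one_ne_zero)).mul_const C) |>.congr_deriv ?_
  simp

theorem weightedEuler_of_dilation {a : ℝ → ℝ → ℝ → ℝ} {F : ℝ × ℝ × ℝ → ℝ}
    (haF : ∀ p : ℝ × ℝ × ℝ, 0 < p.1 → a p.1 p.2.1 p.2.2 = F p) {u₁ u₂ u₃ : ℝ} (hu : 0 < u₁)
    (hF : DifferentiableAt ℝ F (u₁, u₂, u₃)) {m n : ℕ} {r A B C : ℝ}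
    (hFdil : ∀ t, 0 < t → F (t * u₁, t ^ 2 * u₂, t ^ 3 * u₃) = t ^ m * A + t ^ n * B + t ^ r * C) :
    weightedEuler a u₁ u₂ u₃ = m * A + n * B + r * C := by
  have haF_near : (fun p : ℝ × ℝ × ℝ => a p.1 p.2.1 p.2.2) =ᶠ[nhds (u₁, u₂, u₃)] F :=
    (continuous_fst.tendsto (u₁, u₂, u₃)).eventually (eventually_gt_nhds hu) |>.mono haF
  have hdil_near : (fun t => a (t * u₁) (t ^ 2 * u₂) (t ^ 3 * u₃)) =ᶠ[nhds 1]
      (fun t : ℝ => t ^ m * A + t ^ n * B + t ^ r * C) := by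
    filter_upwards [eventually_gt_nhds one_pos] with t ht
    rw [haF (t * u₁, t ^ 2 * u₂, t ^ 3 * u₃) (mul_pos ht hu), hFdil t ht]
  rw [weightedEuler_eq_deriv_dilation (hF.congr_of_eventuallyEq haF_near), hdil_near.deriv_eq,
    (hasDerivAt_pow_add_pow_add_rpow m n r A B C).deriv]

/-- For any `C¹` functions `v₁, v₂ : ℝ² → ℝ` and admissible `ε > 0`, the pair
`a⁽¹⁾(u) = u₁²/(2−ε) + u₂²u₃/(4−7ε) + v₁(u₂/u₁², u₃/u₁³)·u₁^{4/ε}`,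
`a⁽²⁾(u) = 3u₁⁴/(3−4ε) + u₂³/(3−6ε) + v₂(u₂/u₁², u₃/u₁³)·u₁^{3/ε}` (for `u₁ > 0`)
solves the pair of first-order PDEs
`ε(u₁∂₁ + 2u₂∂₂ + 3u₃∂₃)a⁽¹⁾ − 4a⁽¹⁾ + 2u₁² + u₂²u₃ = 0` and
`ε(u₁∂₁ + 2u₂∂₂ + 3u₃∂₃)a⁽²⁾ − 3a⁽²⁾ + 3u₁⁴ + u₂³ = 0`. -/
theorem model32_pde_solution (ε : ℝ) (hε : 0 < ε)
    (h1 : 2 - ε ≠ 0) (h2 : 4 - 7 * ε ≠ 0) (h3 : 3 - 4 * ε ≠ 0) (h4 : 3 - 6 * ε ≠ 0)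
    (v₁ v₂ : ℝ × ℝ → ℝ) (hv₁ : ContDiff ℝ 1 v₁) (hv₂ : ContDiff ℝ 1 v₂)
    (a₁ a₂ : ℝ → ℝ → ℝ → ℝ)
    (ha₁ : ∀ u₁ u₂ u₃ : ℝ, 0 < u₁ →
      a₁ u₁ u₂ u₃ = u₁ ^ 2 / (2 - ε) + u₂ ^ 2 * u₃ / (4 - 7 * ε)
        + v₁ (u₂ / u₁ ^ 2, u₃ / u₁ ^ 3) * u₁ ^ (4 / ε))
    (ha₂ : ∀ u₁ u₂ u₃ : ℝ, 0 < u₁ →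
      a₂ u₁ u₂ u₃ = 3 * u₁ ^ 4 / (3 - 4 * ε) + u₂ ^ 3 / (3 - 6 * ε)
        + v₂ (u₂ / u₁ ^ 2, u₃ / u₁ ^ 3) * u₁ ^ (3 / ε)) :
    ∀ u₁ u₂ u₃ : ℝ, 0 < u₁ →
      (ε * (u₁ * deriv (fun s => a₁ s u₂ u₃) u₁
          + 2 * u₂ * deriv (fun s => a₁ u₁ s u₃) u₂
          + 3 * u₃ * deriv (fun s => a₁ u₁ u₂ s) u₃)
        - 4 * a₁ u₁ u₂ u₃ + 2 * u₁ ^ 2 + u₂ ^ 2 * u₃ = 0) ∧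
      (ε * (u₁ * deriv (fun s => a₂ s u₂ u₃) u₁
          + 2 * u₂ * deriv (fun s => a₂ u₁ s u₃) u₂
          + 3 * u₃ * deriv (fun s => a₂ u₁ u₂ s) u₃)
        - 3 * a₂ u₁ u₂ u₃ + 3 * u₁ ^ 4 + u₂ ^ 3 = 0) := by
  intro u₁ u₂ u₃ hu
  have hv₁_diff := hv₁.differentiable one_ne_zero
  have hv₂_diff := hv₂.differentiable one_ne_zero
  have euler₁ : weightedEuler a₁ u₁ u₂ u₃ = (2 : ℕ) * (u₁ ^ 2 / (2 - ε))
      + (7 : ℕ) * (u₂ ^ 2 * u₃ / (4 - 7 * ε))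
      + 4 / ε * (v₁ (u₂ / u₁ ^ 2, u₃ / u₁ ^ 3) * u₁ ^ (4 / ε)) :=
    weightedEuler_of_dilation (fun p hp => ha₁ p.1 p.2.1 p.2.2 hp) hu
      (by fun_prop (disch := simp [hu.ne'])) fun t ht => by
        rw [similarityTerm_dilation v₁ _ ht hu.le]; ring
  have euler₂ : weightedEuler a₂ u₁ u₂ u₃ = (4 : ℕ) * (3 * u₁ ^ 4 / (3 - 4 * ε))
      + (6 : ℕ) * (u₂ ^ 3 / (3 - 6 * ε))
      + 3 / ε * (v₂ (u₂ / u₁ ^ 2, u₃ / u₁ ^ 3) * u₁ ^ (3 / ε)) :=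
    weightedEuler_of_dilation (fun p hp => ha₂ p.1 p.2.1 p.2.2 hp) hu
      (by fun_prop (disch := simp [hu.ne'])) fun t ht => by
        rw [similarityTerm_dilation v₂ _ ht hu.le]; ring
  refine ⟨?_, ?_⟩
  · change ε * weightedEuler a₁ u₁ u₂ u₃ - 4 * a₁ u₁ u₂ u₃ + 2 * u₁ ^ 2 + u₂ ^ 2 * u₃ = 0
    rw [euler₁, ha₁ u₁ u₂ u₃ hu]
    linear_combination -2 * div_mul_cancel₀ (u₁ ^ 2) h1 - div_mul_cancel₀ (u₂ ^ 2 * u₃) h2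
      + v₁ (u₂ / u₁ ^ 2, u₃ / u₁ ^ 3) * u₁ ^ (4 / ε) * mul_div_cancel₀ (4 : ℝ) hε.ne'
  · change ε * weightedEuler a₂ u₁ u₂ u₃ - 3 * a₂ u₁ u₂ u₃ + 3 * u₁ ^ 4 + u₂ ^ 3 = 0
    rw [euler₂, ha₂ u₁ u₂ u₃ hu]
    linear_combination -div_mul_cancel₀ (3 * u₁ ^ 4) h3 - div_mul_cancel₀ (u₂ ^ 3) h4
      + v₂ (u₂ / u₁ ^ 2, u₃ / u₁ ^ 3) * u₁ ^ (3 / ε) * mul_div_cancel₀ (3 : ℝ) hε.ne'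
end
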